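/- arXiv:1302.2898 — 3 statements merged into one kernel-verified Lean document; each statement's English description precedes it below -/
import Mathlib

section
/- π = ∑_{n=0}^∞ (1/16)^n · (4/(8n+1) − 2/(8n+4) − 1/(8n+5) − 1/(8n+6)) (the Bailey–Borwein–Plouffe formula). -/
/-!
Expanding `1 / (1 - x⁸)` as a geometric series and integrating termwise over `[0, 1/√2]`,
the monomial `x^(8n + k - 1)` contributes `2^(-k/2) / (16ⁿ (8n + k))`; the polynomial
`p(x) = 4√2 - 8x³ - 4√2x⁴ - 8x⁵` is chosen so that these combine into the `n`-th BBP term.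
On the other hand `p(x) / (1 - x⁸)` has an elementary antiderivative built from
`log (1 - x²)`, `log (x² - √2x + 1)` and `arctan (√2x - 1)`, whose increment over
`[0, 1/√2]` is `π`.
-/

open Real MeasureTheory intervalIntegral

theorem abs_le_abs_of_mem_uIcc_zero {x r : ℝ} (hx : x ∈ Set.uIcc 0 r) : |x| ≤ |r| := by
  simpa using Set.abs_sub_left_of_mem_uIcc hx

theorem sq_lt_one_of_mem_uIcc_zero {x r : ℝ} (hr : |r| < 1) (hx : x ∈ Set.uIcc 0 r) :
    x ^ 2 < 1 := by
  rw [sq_lt_one_iff_abs_lt_one]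
  exact (abs_le_abs_of_mem_uIcc_zero hx).trans_lt hr

theorem one_sub_pow_eight_pos {x : ℝ} (hx : x ^ 2 < 1) : 0 < 1 - x ^ 8 := by
  have : (x ^ 2) ^ 4 < 1 := pow_lt_one₀ (sq_nonneg x) hx four_ne_zero
  linarith [show (x ^ 2) ^ 4 = x ^ 8 by ring]

theorem hasSum_intervalIntegral_geometric_mul {f : ℝ → ℝ} (hf : Continuous f) {r : ℝ}
    (hr : |r| < 1) {m : ℕ} (hm : m ≠ 0) :
    HasSum (fun n : ℕ => ∫ x in (0:ℝ)..r, (x ^ m) ^ n * f x)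
      (∫ x in (0:ℝ)..r, (1 - x ^ m)⁻¹ * f x) := by
  obtain ⟨C, hC⟩ :=
    (isCompact_uIcc (a := (0:ℝ)) (b := r)).exists_bound_of_continuousOn hf.continuousOn
  have hx : ∀ x ∈ Set.uIoc (0:ℝ) r, |x| ≤ |r| := fun x hx =>
    abs_le_abs_of_mem_uIcc_zero (Set.uIoc_subset_uIcc hx)
  have hrm : |r| ^ m < 1 := pow_lt_one₀ (abs_nonneg r) hr hm
  refine hasSum_integral_of_dominated_convergence (fun n _ => (|r| ^ m) ^ n * C)
    (fun n => by fun_prop) (fun n => ?_) ?_ intervalIntegrable_const ?_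
  · refine .of_forall fun x hxr => ?_
    rw [norm_mul, norm_pow, norm_pow, Real.norm_eq_abs]
    have := hx x hxr
    gcongr
    exact hC x (Set.uIoc_subset_uIcc hxr)
  · exact .of_forall fun _ _ => (summable_geometric_of_lt_one (by positivity) hrm).mul_right C
  · refine .of_forall fun x hxr => (hasSum_geometric_of_norm_lt_one ?_).mul_right (f x)
    rw [norm_pow, Real.norm_eq_abs]
    exact pow_lt_one₀ (abs_nonneg x) ((hx x hxr).trans_lt hr) hm

noncomputable def bbpPoly (x : ℝ) : ℝ :=
  4 * √2 - 8 * x ^ 3 - 4 * √2 * x ^ 4 - 8 * x ^ 5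

noncomputable def bbpAntideriv (x : ℝ) : ℝ :=
  2 * log (1 - x ^ 2) - 2 * log (x ^ 2 - √2 * x + 1) + 4 * arctan (√2 * x - 1)

theorem continuous_bbpPoly : Continuous bbpPoly := by
  unfold bbpPoly; fun_prop

theorem sq_sqrt_two_div_two : (√2 / 2) ^ 2 = 1 / 2 := by
  rw [div_pow, sq_sqrt zero_le_two]; norm_num

theorem abs_sqrt_two_div_two_lt_one : |√2 / 2| < 1 := by
  rw [← sq_lt_one_iff_abs_lt_one, sq_sqrt_two_div_two]; norm_num

theorem hasDerivAt_bbpAntideriv {x : ℝ} (hx : x ^ 2 < 1) :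
    HasDerivAt bbpAntideriv ((1 - x ^ 8)⁻¹ * bbpPoly x) x := by
  have h2 : √2 ^ 2 = 2 := sq_sqrt zero_le_two
  have h1 : 0 < 1 - x ^ 2 := by linarith
  have hq : 0 < x ^ 2 - √2 * x + 1 := by nlinarith [sq_nonneg (x - √2 / 2)]
  have h8 := (one_sub_pow_eight_pos hx).ne'
  have d1 : HasDerivAt (fun y => log (1 - y ^ 2)) (-(2 * x) / (1 - x ^ 2)) x := by
    simpa using (((hasDerivAt_pow 2 x).const_sub 1).log h1.ne')
  have d2 : HasDerivAt (fun y => log (y ^ 2 - √2 * y + 1))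
      ((2 * x - √2) / (x ^ 2 - √2 * x + 1)) x := by
    simpa using
      (((hasDerivAt_pow 2 x).sub ((hasDerivAt_id x).const_mul √2)).add_const 1).log hq.ne'
  have d3 : HasDerivAt (fun y => arctan (√2 * y - 1)) (1 / (1 + (√2 * x - 1) ^ 2) * √2) x :=
    (hasDerivAt_arctan _).comp x (by simpa using ((hasDerivAt_id x).const_mul √2).sub_const 1)
  refine (((d1.const_mul 2).sub (d2.const_mul 2)).add (d3.const_mul 4)).congr_deriv ?_
  have key : 1 + (√2 * x - 1) ^ 2 = 2 * (x ^ 2 - √2 * x + 1) := by linear_combination x ^ 2 * h2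
  rw [key, bbpPoly]
  field_simp [show x * (x - √2) + 1 ≠ 0 by linarith]
  linear_combination (8 * x ^ 7 - 8 * x ^ 5 - 8 * x ^ 3 + 8 * x) * h2

theorem bbpAntideriv_sqrt_two_div_two : bbpAntideriv (√2 / 2) = 0 := by
  have h2 : √2 * (√2 / 2) = 1 := by
    rw [← mul_div_assoc, mul_self_sqrt zero_le_two]; norm_num
  norm_num [bbpAntideriv, sq_sqrt_two_div_two, h2]

theorem bbpAntideriv_zero : bbpAntideriv 0 = -π := by
  simp [bbpAntideriv]
  ring

theorem integral_bbp : ∫ x in (0:ℝ)..√2 / 2, (1 - x ^ 8)⁻¹ * bbpPoly x = π := by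
  have hsq : ∀ x ∈ Set.uIcc 0 (√2 / 2), x ^ 2 < 1 := fun x =>
    sq_lt_one_of_mem_uIcc_zero abs_sqrt_two_div_two_lt_one
  rw [integral_eq_sub_of_hasDerivAt (fun x hx => hasDerivAt_bbpAntideriv (hsq x hx))
    (((continuousOn_const.sub (continuousOn_pow 8)).inv₀
      fun x hx => (one_sub_pow_eight_pos (hsq x hx)).ne').mul
      continuous_bbpPoly.continuousOn).intervalIntegrable,
    bbpAntideriv_sqrt_two_div_two, bbpAntideriv_zero, sub_neg_eq_add, zero_add]

theorem integral_pow_mul_bbpPoly (n : ℕ) :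
    ∫ x in (0:ℝ)..√2 / 2, (x ^ 8) ^ n * bbpPoly x
      = (1 / 16) ^ n * (4 / (8 * n + 1) - 2 / (8 * n + 4) - 1 / (8 * n + 5) - 1 / (8 * n + 6)) := by
  obtain ⟨r, hr⟩ : ∃ r, r = √2 / 2 := ⟨_, rfl⟩
  have hr2 : r ^ 2 = 1 / 2 := hr ▸ sq_sqrt_two_div_two
  rw [← hr]
  have expand : ∀ x, (x ^ 8) ^ n * bbpPoly x
      = 8 * r * x ^ (8 * n) - 8 * x ^ (8 * n + 3) - 8 * r * x ^ (8 * n + 4) - 8 * x ^ (8 * n + 5) :=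
    fun x => by rw [bbpPoly, hr]; ring
  have integrable : ∀ f : ℝ → ℝ, Continuous f → IntervalIntegrable f volume 0 r :=
    fun f hf => hf.intervalIntegrable _ _
  simp_rw [expand]
  rw [integral_sub (integrable _ (by fun_prop)) (integrable _ (by fun_prop)),
    integral_sub (integrable _ (by fun_prop)) (integrable _ (by fun_prop)),
    integral_sub (integrable _ (by fun_prop)) (integrable _ (by fun_prop))]
  simp only [intervalIntegral.integral_const_mul, integral_pow, zero_pow (Nat.succ_ne_zero _),
    sub_zero]
  push_cast
  calc _ = 8 * ((r ^ 2) ^ 4) ^ n * (r ^ 2 / (8 * n + 1) - (r ^ 2) ^ 2 / (8 * n + 4)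
        - (r ^ 2) ^ 3 / (8 * n + 5) - (r ^ 2) ^ 3 / (8 * n + 6)) := by ring
    _ = _ := by rw [hr2]; norm_num; ring

theorem bbp_formula :
    Real.pi = ∑' n : ℕ, (1/16 : ℝ)^n *
      (4/(8*n+1) - 2/(8*n+4) - 1/(8*n+5) - 1/(8*n+6)) := by
  have h := hasSum_intervalIntegral_geometric_mul continuous_bbpPoly abs_sqrt_two_div_two_lt_one
    (m := 8) (by norm_num)
  simp only [integral_bbp, integral_pow_mul_bbpPoly] at h
  exact h.tsum_eq.symm
end

section
/- In the plane, at most six pairwise nonoverlapping unit disks can all be tangent to a fixed central unit disk; that is, the kissing number in dimension 2 is 6. -/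
/-!
Identify the plane with `ℂ`. By the law of cosines, two points on the circle of radius `r` whose
arguments differ by less than `π / 3` are at distance less than `r`. Cutting the range of `arg`
into six half-open arcs of length `π / 3`, seven or more points would put two in the same arc.
-/

open Complex

theorem Complex.norm_sub_sq_eq_sub_cos_arg_sub (z w : ℂ) :
    ‖z - w‖ ^ 2 = ‖z‖ ^ 2 + ‖w‖ ^ 2 - 2 * ‖z‖ * ‖w‖ * Real.cos (arg z - arg w) := by
  have hzre := norm_mul_cos_arg z
  have hzim := norm_mul_sin_arg z
  have hwre := norm_mul_cos_arg w
  have hwim := norm_mul_sin_arg w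
  simp only [Complex.sq_norm, normSq_apply, sub_re, sub_im, Real.cos_sub]
  linear_combination (2 * ‖w‖ * Real.cos (arg w)) * hzre + 2 * z.re * hwre
    + (2 * ‖w‖ * Real.sin (arg w)) * hzim + 2 * z.im * hwim

theorem Complex.norm_sub_lt_of_abs_arg_sub_lt {z w : ℂ} {r : ℝ} (hr : 0 < r) (hz : ‖z‖ = r)
    (hw : ‖w‖ = r) (harg : |arg z - arg w| < Real.pi / 3) : ‖z - w‖ < r := by
  have hcos : 1 / 2 < Real.cos (arg z - arg w) := by
    rw [← Real.cos_abs, ← Real.cos_pi_div_three]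
    exact Real.cos_lt_cos_of_nonneg_of_le_pi (abs_nonneg _) (by linarith [Real.pi_pos]) harg
  refine lt_of_pow_lt_pow_left₀ 2 hr.le ?_
  rw [norm_sub_sq_eq_sub_cos_arg_sub, hz, hw]
  nlinarith [mul_pos (mul_pos hr hr) (sub_pos.2 hcos)]

theorem exists_ne_abs_sub_lt_of_card_lt {ι : Type*} [Fintype ι] {k : ℕ} (hk : 0 < k)
    (hcard : k < Fintype.card ι) {x : ι → ℝ} {a L : ℝ} (hx : ∀ i, x i ∈ Set.Ico a (a + L)) :
    ∃ i j, i ≠ j ∧ |x i - x j| < L / k := by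
  obtain ⟨i₀⟩ : Nonempty ι := Fintype.card_pos_iff.mp (by omega)
  have hL : 0 < L := by linarith [(hx i₀).1, (hx i₀).2]
  have hδ : 0 < L / k := by positivity
  let bin : ι → ℤ := fun i => ⌊(x i - a) / (L / k)⌋
  have hbin : ∀ i ∈ Finset.univ, bin i ∈ Finset.Ico (0 : ℤ) k := by
    intro i _
    have hi := hx i
    rw [Finset.mem_Ico, Int.floor_nonneg, Int.floor_lt, div_nonneg_iff, div_lt_iff₀ hδ]
    refine ⟨.inl ⟨by linarith [hi.1], hδ.le⟩, ?_⟩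
    rw [Int.cast_natCast, mul_div_cancel₀ _ (by positivity)]
    linarith [hi.2]
  obtain ⟨i, -, j, -, hij, hbij⟩ :=
    Finset.exists_ne_map_eq_of_card_lt_of_maps_to (by simpa using hcard) hbin
  refine ⟨i, j, hij, ?_⟩
  have h := Int.abs_sub_lt_one_of_floor_eq_floor hbij
  rwa [← sub_div, sub_sub_sub_cancel_right, abs_div, abs_of_pos hδ, div_lt_one hδ] at h

theorem Complex.card_le_six_of_norm_eq_of_le_dist {ι : Type*} [Fintype ι] {r : ℝ} (hr : 0 < r)
    {z : ι → ℂ} (hnorm : ∀ i, ‖z i‖ = r) (hsep : ∀ i j, i ≠ j → r ≤ dist (z i) (z j)) :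
    Fintype.card ι ≤ 6 := by
  by_contra! hcard
  -- `arg` takes values in `(-π, π]`; negating it gives the half-open interval of the pigeonhole.
  have harg : ∀ i, -arg (z i) ∈ Set.Ico (-Real.pi) (-Real.pi + 2 * Real.pi) := fun i =>
    ⟨by linarith [arg_le_pi (z i)], by linarith [neg_pi_lt_arg (z i)]⟩
  obtain ⟨i, j, hij, hclose⟩ := exists_ne_abs_sub_lt_of_card_lt (by norm_num) hcard harg
  rw [neg_sub_neg, abs_sub_comm] at hclose
  have hlt := norm_sub_lt_of_abs_arg_sub_lt hr (hnorm i) (hnorm j) (by linarith)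
  linarith [hsep i j hij, dist_eq_norm (z i) (z j)]

theorem kissing_number_two_dim (n : ℕ) (p : Fin n → EuclideanSpace ℝ (Fin 2))
    (htouch : ∀ i, ‖p i‖ = 2)
    (hsep : ∀ i j, i ≠ j → 2 ≤ dist (p i) (p j)) :
    n ≤ 6 := by
  let e := orthonormalBasisOneI.repr.symm
  simpa using card_le_six_of_norm_eq_of_le_dist (z := fun i => e (p i)) two_pos
    (fun i => (e.norm_map (p i)).trans (htouch i))
    (fun i j hij => (e.dist_map (p i) (p j)).symm ▸ hsep i j hij)
end

section
/- If (x₁, y₁) satisfies y₁² = 1 + a·x₁² + b·x₁⁴ with y₁ ≠ 0, and x₂, y₂ satisfy x₂·y₁ = x₁ and y₂·y₁² = 1 − b·x₁⁴, then y₂² = 1 + a'·x₂² + b'·x₂⁴ where a' = −2a and b' = a² − 4b. -/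
theorem elliptic_curve_isogeny {F : Type} [Field F]
    (a b x₁ y₁ x₂ y₂ : F)
    (h1 : y₁^2 = 1 + a*x₁^2 + b*x₁^4)
    (hy : y₁ ≠ 0)
    (h2 : x₂*y₁ = x₁)
    (h3 : y₂*y₁^2 = 1 - b*x₁^4) :
    y₂^2 = 1 + (-2*a)*x₂^2 + (a^2 - 4*b)*x₂^4 := by
  have key : y₂^2 * y₁^4 = (1 + (-2*a)*x₂^2 + (a^2 - 4*b)*x₂^4) * y₁^4 := by
    linear_combination (y₂*y₁^2 + 1 - b*x₁^4)*h3 +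
      2*a*y₁^2*(x₂*y₁+x₁)*h2 -
      (a^2-4*b)*(x₂^2*y₁^2+x₁^2)*(x₂*y₁+x₁)*h2 -
      (y₁^2 + 1 + a*x₁^2 + b*x₁^4 - 2*a*x₁^2)*h1
  exact mul_right_cancel₀ (pow_ne_zero 4 hy) key
end
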